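/- Let (u,v) be an edge. Suppose an execution contains two transitions A_0 ↦ A_1 and A_2 ↦ A_3 and a configuration A_4, with A_1 ↦* A_2 and A_3 ↦* A_4, such that: in A_0 ↦ A_1 node v executes a u-rule; in A_2 ↦ A_3 node u executes the Reset rule; and in A_4 it holds that (p_u, m_u) = (v,2). Then the edge (min(u,v), max(u,v)) is in a correct state in A_4. -/
import Mathlib


/-!
Formal model of the self-stabilizing maximal-matching algorithm in the
link-register model under read/write atomicity.

Nodes form a finite simple graph `G` on a vertex type `V` whose linear order
plays the role of the distinct identifiers.  A configuration records, for each
node `u`, its pointer `p u : Option V` (`none` = null), its lock variable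
`m u : Fin 3`, and for each (directed) link a register `r u v : RegFlag × Fin 3`.
-/

inductive RegFlag where
  | Idle | You | Other
deriving DecidableEq

abbrev RegVal : Type := RegFlag × Fin 3

inductive Rule (V : Type) where
  | write (a : V)
  | seduction (a : V)
  | marriage (a : V)
  | increase
  | reset
deriving DecidableEq

structure Config (V : Type) where
  p : V → Option V
  m : V → Fin 3
  r : V → V → RegVal

variable {V : Type}

def correctRegisterValue [DecidableEq V] (C : Config V) (u a : V) : RegVal :=
  match C.p u with
  | none => (RegFlag.Idle, 0)
  | some b => if b = a then (RegFlag.You, C.m u) else (RegFlag.Other, C.m u)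

def PRabandonment [LinearOrder V] (C : Config V) (u : V) : Prop :=
  ∃ v, C.p u = some v ∧
    (((C.r v u).1 ≠ RegFlag.You ∧ (v < u ∨ C.m u ≠ 0)) ∨
     (C.r v u = (RegFlag.Other, 2) ∧ u < v))

def PRreset [LinearOrder V] (C : Config V) (u : V) : Prop :=
  ∃ v, C.p u = some v ∧ (C.r v u).1 = RegFlag.You ∧
    ((C.m u = 0 ∧ (C.r v u).2 = 2) ∨
     (C.m u = 2 ∧ (C.r v u).2 = 0) ∨
     (C.m u = 0 ∧ (C.r v u).2 = 1 ∧ v < u) ∨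
     (C.m u = 1 ∧ (C.r v u).2 = 0 ∧ u < v) ∨
     (C.m u = 1 ∧ (C.r v u).2 = 2 ∧ u < v) ∨
     (C.m u = 2 ∧ (C.r v u).2 = 1 ∧ v < u))

/-- The guard of each rule of node `u` in configuration `C`. -/
def eligible [LinearOrder V] (G : SimpleGraph V) (C : Config V) (u : V) : Rule V → Prop
  | .write a => G.Adj u a ∧ C.r u a ≠ correctRegisterValue C u a
  | .seduction a => G.Adj u a ∧ C.p u = none ∧ C.r u a = correctRegisterValue C u a ∧
      C.r a u = (RegFlag.Idle, 0) ∧ u < a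
  | .marriage a => G.Adj u a ∧ C.p u = none ∧ C.r u a = correctRegisterValue C u a ∧
      C.r a u = (RegFlag.You, 0) ∧ a < u
  | .increase => ∃ v, C.p u = some v ∧ C.r u v = correctRegisterValue C u v ∧
      (C.r v u).1 = RegFlag.You ∧
      ((C.m u = 0 ∧ ((u < v ∧ (C.r v u).2 = 1) ∨ (v < u ∧ (C.r v u).2 = 0))) ∨
       (C.m u = 1 ∧ ((u < v ∧ (C.r v u).2 = 1) ∨ (v < u ∧ (C.r v u).2 = 2))))
  | .reset => ∃ v, C.p u = some v ∧ C.r u v = correctRegisterValue C u v ∧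
      (PRabandonment C u ∨ PRreset C u)

/-- Simultaneous application of (at most) one rule per node.  `A u = some R`
means node `u` executes rule `R`; each action only modifies the data owned by
the acting node. -/
def step [DecidableEq V] (C : Config V) (A : V → Option (Rule V)) : Config V where
  p u :=
    match A u with
    | some (Rule.seduction a) => some a
    | some (Rule.marriage a) => some a
    | some Rule.reset => none
    | _ => C.p u
  m u :=
    match A u with
    | some (Rule.seduction _) => 0
    | some (Rule.marriage _) => 0
    | some Rule.reset => 0
    | some Rule.increase => C.m u + 1
    | _ => C.m u
  r u a :=
    match A u with
    | some (Rule.write b) => if a = b then correctRegisterValue C u a else C.r u a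
    | _ => C.r u a

/-- An execution `C_0, A_0, C_1, A_1, …, C_T`: at each transition `i < T`, a
nonempty set of eligible rules (at most one per node) is executed
simultaneously. -/
structure Execution [LinearOrder V] (G : SimpleGraph V) where
  T : ℕ
  conf : ℕ → Config V
  act : ℕ → V → Option (Rule V)
  act_nonempty : ∀ i < T, ∃ u, (act i u).isSome
  act_eligible : ∀ i < T, ∀ u R, act i u = some R → eligible G (conf i) u R
  conf_succ : ∀ i < T, conf (i + 1) = step (conf i) (act i)

/-- A configuration is stable if no rule is eligible at any node. -/
def stableConfig [LinearOrder V] (G : SimpleGraph V) (C : Config V) : Prop :=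
  ∀ u R, ¬ eligible G C u R

/-- The edge `(s,t)` (with `s < t` intended) is in state `(You, α, β)`. -/
def edgeState (C : Config V) (s t : V) (α β : Fin 3) : Prop :=
  C.p s = some t ∧ C.p t = some s ∧ C.m s = α ∧ C.m t = β

def updatedCorrectState (C : Config V) (s t : V) (α β : Fin 3) : Prop :=
  edgeState C s t α β ∧ C.r s t = (RegFlag.You, α) ∧ C.r t s = (RegFlag.You, β) ∧
    ((α, β) = ((0 : Fin 3), (0 : Fin 3)) ∨ (α, β) = (0, 1) ∨ (α, β) = (1, 1) ∨
     (α, β) = (2, 1) ∨ (α, β) = (2, 2))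

def toUpdateCorrectState (C : Config V) (s t : V) (α β : Fin 3) : Prop :=
  edgeState C s t α β ∧
    ((((α, β) = ((0 : Fin 3), (1 : Fin 3)) ∨ (α, β) = (2, 2)) ∧
        C.r s t = (RegFlag.You, α) ∧ C.r t s = (RegFlag.You, β - 1)) ∨
     (((α, β) = ((1 : Fin 3), (1 : Fin 3)) ∨ (α, β) = (2, 1)) ∧
        C.r s t = (RegFlag.You, α - 1) ∧ C.r t s = (RegFlag.You, β)))

def correctState (C : Config V) (s t : V) (α β : Fin 3) : Prop :=
  updatedCorrectState C s t α β ∨ toUpdateCorrectState C s t α β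

/-- Node `u` executes a `v`-rule in transition `k`: one of `Write(v)`,
`Seduction(v)`, `Marriage(v)`, a `v`-`Increase` or a `v`-`Reset`. -/
def execVRule [LinearOrder V] {G : SimpleGraph V} (E : Execution G) (k : ℕ) (u v : V) : Prop :=
  k < E.T ∧
    (E.act k u = some (Rule.write v) ∨ E.act k u = some (Rule.seduction v) ∨
     E.act k u = some (Rule.marriage v) ∨
     ((E.act k u = some Rule.increase ∨ E.act k u = some Rule.reset) ∧
       (E.conf k).p u = some v))

/-! ### Auxiliary development for Statement 17 -/

section Stmt17Aux

variable {V : Type} [LinearOrder V] {G : SimpleGraph V}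

private lemma fin3_cases : ∀ m : Fin 3, m = 0 ∨ m = 1 ∨ m = 2 := by decide

lemma crv_none {C : Config V} {x a : V} (h : C.p x = none) :
    correctRegisterValue C x a = (RegFlag.Idle, 0) := by
  simp [correctRegisterValue, h]

lemma crv_self {C : Config V} {x a : V} (h : C.p x = some a) :
    correctRegisterValue C x a = (RegFlag.You, C.m x) := by
  simp [correctRegisterValue, h]

lemma crv_eq_you {C : Config V} {x a : V} {k : Fin 3}
    (h : correctRegisterValue C x a = (RegFlag.You, k)) :
    C.p x = some a ∧ C.m x = k := by
  unfold correctRegisterValue at h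
  split at h
  · exact absurd h (by simp)
  · rename_i b hb
    split at h
    · rename_i hba
      subst hba
      simp only [Prod.mk.injEq, true_and] at h
      exact ⟨hb, h⟩
    · exact absurd h (by simp)

lemma crv_eq_idle {C : Config V} {x a : V}
    (h : correctRegisterValue C x a = (RegFlag.Idle, 0)) :
    C.p x = none := by
  unfold correctRegisterValue at h
  split at h
  · assumption
  · split at h <;> exact absurd h (by simp)

/-- Per-node transition relation extracted from a step of the execution. -/
def NodeTrans (C D : Config V) (x : V) : Prop :=
  (D.p x = C.p x ∧ D.m x = C.m x ∧ ∀ y, D.r x y = C.r x y) ∨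
  (∃ b, D.p x = C.p x ∧ D.m x = C.m x ∧
    (∀ y, D.r x y = if y = b then correctRegisterValue C x y else C.r x y)) ∨
  (∃ b, C.p x = none ∧ C.r x b = correctRegisterValue C x b ∧
    C.r b x = (RegFlag.Idle, 0) ∧ x < b ∧
    D.p x = some b ∧ D.m x = 0 ∧ ∀ y, D.r x y = C.r x y) ∨
  (∃ b, C.p x = none ∧ C.r x b = correctRegisterValue C x b ∧
    C.r b x = (RegFlag.You, 0) ∧ b < x ∧
    D.p x = some b ∧ D.m x = 0 ∧ ∀ y, D.r x y = C.r x y) ∨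
  (∃ w, C.p x = some w ∧ C.r x w = correctRegisterValue C x w ∧
    (C.r w x).1 = RegFlag.You ∧
    ((C.m x = 0 ∧ ((x < w ∧ (C.r w x).2 = 1) ∨ (w < x ∧ (C.r w x).2 = 0))) ∨
     (C.m x = 1 ∧ ((x < w ∧ (C.r w x).2 = 1) ∨ (w < x ∧ (C.r w x).2 = 2)))) ∧
    D.p x = C.p x ∧ D.m x = C.m x + 1 ∧ ∀ y, D.r x y = C.r x y) ∨
  (∃ w, C.p x = some w ∧ C.r x w = correctRegisterValue C x w ∧
    (PRabandonment C x ∨ PRreset C x) ∧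
    D.p x = none ∧ D.m x = 0 ∧ ∀ y, D.r x y = C.r x y)

lemma exec_nodeTrans (E : Execution G) {t : ℕ} (ht : t < E.T) (x : V) :
    NodeTrans (E.conf t) (E.conf (t + 1)) x := by
  have hs := E.conf_succ t ht
  cases h : E.act t x with
  | none =>
    refine Or.inl ⟨?_, ?_, fun y => ?_⟩ <;> rw [hs] <;> simp [step, h]
  | some R =>
    have he := E.act_eligible t ht x R h
    cases R with
    | write b =>
      refine Or.inr (Or.inl ⟨b, ?_, ?_, fun y => ?_⟩) <;> rw [hs] <;> simp [step, h]
    | seduction b =>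
      obtain ⟨-, h1, h2, h3, h4⟩ := he
      refine Or.inr (Or.inr (Or.inl ⟨b, h1, h2, h3, h4, ?_, ?_, fun y => ?_⟩)) <;>
        rw [hs] <;> simp [step, h]
    | marriage b =>
      obtain ⟨-, h1, h2, h3, h4⟩ := he
      refine Or.inr (Or.inr (Or.inr (Or.inl ⟨b, h1, h2, h3, h4, ?_, ?_, fun y => ?_⟩))) <;>
        rw [hs] <;> simp [step, h]
    | increase =>
      obtain ⟨w, h1, h2, h3, h4⟩ := he
      refine Or.inr (Or.inr (Or.inr (Or.inr (Or.inl
        ⟨w, h1, h2, h3, h4, ?_, ?_, fun y => ?_⟩)))) <;> rw [hs] <;> simp [step, h]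
    | reset =>
      obtain ⟨w, h1, h2, h3⟩ := he
      refine Or.inr (Or.inr (Or.inr (Or.inr (Or.inr
        ⟨w, h1, h2, h3, ?_, ?_, fun y => ?_⟩)))) <;> rw [hs] <;> simp [step, h]

end Stmt17Aux

section Stmt17Inv

variable {V : Type} [LinearOrder V] {G : SimpleGraph V}

/-- What a step can do to the variables of `v` that are relevant to the pair `(u,v)`. -/
def VSide (C D : Config V) (u v : V) : Prop :=
  (D.p v = C.p v ∧ D.m v = C.m v ∧ D.r v u = C.r v u) ∨
  (D.p v = C.p v ∧ D.m v = C.m v ∧ D.r v u = correctRegisterValue C v u) ∨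
  (C.p v = none ∧ D.m v = 0 ∧ D.r v u = C.r v u) ∨
  (∃ w, C.p v = some w ∧ D.p v = C.p v ∧ D.m v = C.m v + 1 ∧ D.r v u = C.r v u ∧
     C.r v w = correctRegisterValue C v w ∧ (C.r w v).1 = RegFlag.You ∧
     ((C.m v = 0 ∧ ((v < w ∧ (C.r w v).2 = 1) ∨ (w < v ∧ (C.r w v).2 = 0))) ∨
      (C.m v = 1 ∧ ((v < w ∧ (C.r w v).2 = 1) ∨ (w < v ∧ (C.r w v).2 = 2))))) ∨
  (∃ w, C.p v = some w ∧ D.p v = none ∧ D.m v = 0 ∧ D.r v u = C.r v u ∧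
     C.r v w = correctRegisterValue C v w ∧ (PRabandonment C v ∨ PRreset C v))

lemma vside_of_nodeTrans {C D : Config V} {u v : V} (h : NodeTrans C D v) :
    VSide C D u v := by
  rcases h with ⟨h1, h2, h3⟩ | ⟨b, h1, h2, h3⟩ | ⟨b, h1, h2, h3, h4, h5, h6, h7⟩ |
    ⟨b, h1, h2, h3, h4, h5, h6, h7⟩ | ⟨w, h1, h2, h3, h4, h5, h6, h7⟩ |
    ⟨w, h1, h2, h3, h4, h5, h6⟩
  · exact Or.inl ⟨h1, h2, h3 u⟩
  · by_cases hub : u = b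
    · subst hub
      exact Or.inr (Or.inl ⟨h1, h2, by rw [h3 u, if_pos rfl]⟩)
    · exact Or.inl ⟨h1, h2, by rw [h3 u, if_neg hub]⟩
  · exact Or.inr (Or.inr (Or.inl ⟨h1, h6, h7 u⟩))
  · exact Or.inr (Or.inr (Or.inl ⟨h1, h6, h7 u⟩))
  · exact Or.inr (Or.inr (Or.inr (Or.inl ⟨w, h1, h5, h6, h7 u, h2, h3, h4⟩)))
  · exact Or.inr (Or.inr (Or.inr (Or.inr ⟨w, h1, h4, h5, h6 u, h2, h3⟩)))

/-- Clause (a): the relation between `m_u` and the register `r_{uv}` inside an epoch. -/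
def Acl (u v : V) (C : Config V) : Prop :=
  (C.m u = 0 ∧ (C.r u v = (RegFlag.Idle, 0) ∨ C.r u v = (RegFlag.You, 0))) ∨
  (C.m u = 1 ∧ (C.r u v = (RegFlag.You, 0) ∨ C.r u v = (RegFlag.You, 1))) ∨
  (C.m u = 2 ∧ (C.r u v = (RegFlag.You, 1) ∨ C.r u v = (RegFlag.You, 2)))

lemma Acl_r_you2 {u v : V} {C : Config V} (ha : Acl u v C)
    (h : C.r u v = (RegFlag.You, 2)) : C.m u = 2 := by
  rcases ha with ⟨hm, hr | hr⟩ | ⟨hm, hr | hr⟩ | ⟨hm, hr | hr⟩ <;> rw [h] at hr <;>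
    first
      | exact absurd hr (by decide)
      | exact hm

lemma Acl_r_you1 {u v : V} {C : Config V} (ha : Acl u v C)
    (h : C.r u v = (RegFlag.You, 1)) : C.m u = 1 ∨ C.m u = 2 := by
  rcases ha with ⟨hm, hr | hr⟩ | ⟨hm, hr | hr⟩ | ⟨hm, hr | hr⟩ <;> rw [h] at hr <;>
    first
      | exact absurd hr (by decide)
      | exact Or.inl hm
      | exact Or.inr hm

/-- Preservation of clause (a). -/
lemma Acl_pres {u v : V} {C D : Config V} (ha : Acl u v C)
    (hmu : D.m u = C.m u ∨
      (D.m u = C.m u + 1 ∧ (C.m u = 0 ∨ C.m u = 1) ∧ C.r u v = (RegFlag.You, C.m u)))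
    (hru : D.r u v = C.r u v ∨ (D.r u v = (RegFlag.You, C.m u) ∧ D.m u = C.m u)) :
    Acl u v D := by
  rcases hmu with hmu | ⟨hmu, hm01, hcr⟩
  · rcases hru with hru | ⟨hru, -⟩
    · unfold Acl; rw [hmu, hru]; exact ha
    · rcases fin3_cases (C.m u) with h | h | h
      · exact Or.inl ⟨by rw [hmu, h], Or.inr (by rw [hru, h])⟩
      · exact Or.inr (Or.inl ⟨by rw [hmu, h], Or.inr (by rw [hru, h])⟩)
      · exact Or.inr (Or.inr ⟨by rw [hmu, h], Or.inr (by rw [hru, h])⟩)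
  · rcases hru with hru | ⟨-, hru2⟩
    · rcases hm01 with h | h
      · exact Or.inr (Or.inl ⟨by rw [hmu, h]; decide, Or.inl (by rw [hru, hcr, h])⟩)
      · exact Or.inr (Or.inr ⟨by rw [hmu, h]; decide, Or.inl (by rw [hru, hcr, h])⟩)
    · rw [hru2] at hmu
      exact absurd hmu (by
        have : ∀ m : Fin 3, ¬ m = m + 1 := by decide
        exact this _)

/-- The global knowledge obtained from `v` having executed a `u`-rule, case `u < v`. -/
def KL (u v : V) (C : Config V) : Prop :=
  C.r v u = (RegFlag.Idle, 0) → (C.p v ≠ some u ∨ C.m v = 0)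

/-- The global knowledge obtained from `v` having executed a `u`-rule, case `v < u`. -/
def KR (u v : V) (C : Config V) : Prop :=
  C.p v = some u → C.m v = 2 →
    (C.r v u = (RegFlag.You, 1) ∨ C.r v u = (RegFlag.You, 2))

/-- Epoch clauses, case `u < v`. -/
def ClausesL (u v : V) (C : Config V) : Prop :=
  Acl u v C ∧
  (C.p v = some u → C.m v ≠ 0 →
    ((C.r u v).1 = RegFlag.You ∧ (C.m v = 2 → C.r u v = (RegFlag.You, 2)))) ∧
  (C.r v u = (RegFlag.You, 1) → C.p v = some u ∧ (C.m v = 1 ∨ C.m v = 2)) ∧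
  (C.r v u = (RegFlag.You, 2) → C.p v = some u ∧ C.m v = 2) ∧
  (C.m u = 2 → (C.r v u = (RegFlag.You, 1) ∨ C.r v u = (RegFlag.You, 2)))

def EpochL (u v : V) (C : Config V) : Prop :=
  C.p u = some v → ClausesL u v C

/-- Epoch clauses, case `v < u`. -/
def ClausesR (u v : V) (C : Config V) : Prop :=
  Acl u v C ∧
  (C.p v = some u → C.m v = 2 →
    (C.m u ≠ 0 ∧ (C.r u v = (RegFlag.You, 1) ∨ C.r u v = (RegFlag.You, 2)))) ∧
  (C.r v u = (RegFlag.You, 2) → C.p v = some u ∧ C.m v = 2) ∧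
  (C.m u = 2 → C.r v u = (RegFlag.You, 2))

def EpochR (u v : V) (C : Config V) : Prop :=
  C.p u = some v → ClausesR u v C

/-- `v` pointing at `u` with the appropriate knowledge cannot reset, case `u < v`. -/
lemma no_reset_L {u v : V} {C : Config V} (huv : u < v) (hpv : C.p v = some u)
    (hY : (C.r u v).1 = RegFlag.You)
    (hm12 : C.m v = 1 ∨ (C.m v = 2 ∧ C.r u v = (RegFlag.You, 2)))
    (hPR : PRabandonment C v ∨ PRreset C v) : False := by
  rcases hPR with ⟨w, hw, hd⟩ | ⟨w, hw, hYw, hd⟩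
  · rw [hpv] at hw
    have hwu : w = u := (Option.some.inj hw).symm
    subst hwu
    rcases hd with ⟨hne, -⟩ | ⟨-, hlt⟩
    · exact hne hY
    · exact absurd hlt (lt_asymm huv)
  · rw [hpv] at hw
    have hwu : w = u := (Option.some.inj hw).symm
    subst hwu
    rcases hm12 with hm | ⟨hm, hr⟩ <;>
      rcases hd with ⟨h1, h2⟩ | ⟨h1, h2⟩ | ⟨h1, h2, h3⟩ | ⟨h1, h2, h3⟩ | ⟨h1, h2, h3⟩ |
        ⟨h1, h2, h3⟩ <;>
      rw [hm] at h1 <;>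
      first
        | exact absurd h1 (by decide)
        | exact absurd h3 (lt_asymm huv)
        | (rw [hr] at h2; exact absurd h2 (by decide))

/-- `v` pointing at `u` with the appropriate knowledge cannot reset, case `v < u`. -/
lemma no_reset_R {u v : V} {C : Config V} (hvu : v < u) (hpv : C.p v = some u)
    (hm2 : C.m v = 2)
    (hr : C.r u v = (RegFlag.You, 1) ∨ C.r u v = (RegFlag.You, 2))
    (hPR : PRabandonment C v ∨ PRreset C v) : False := by
  rcases hPR with ⟨w, hw, hd⟩ | ⟨w, hw, hYw, hd⟩
  · rw [hpv] at hw
    have hwu : w = u := (Option.some.inj hw).symm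
    subst hwu
    rcases hd with ⟨hne, -⟩ | ⟨heq, -⟩
    · rcases hr with hr | hr <;> rw [hr] at hne <;> exact hne rfl
    · rcases hr with hr | hr <;> rw [hr] at heq <;> exact absurd heq (by decide)
  · rw [hpv] at hw
    have hwu : w = u := (Option.some.inj hw).symm
    subst hwu
    rcases hd with ⟨h1, h2⟩ | ⟨h1, h2⟩ | ⟨h1, h2, h3⟩ | ⟨h1, h2, h3⟩ | ⟨h1, h2, h3⟩ |
      ⟨h1, h2, h3⟩ <;> rw [hm2] at h1 <;>
      first
        | exact absurd h1 (by decide)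
        | exact absurd h3 (lt_asymm hvu)
        | (rcases hr with hr | hr <;> rw [hr] at h2 <;> exact absurd h2 (by decide))

end Stmt17Inv

section Stmt17Pres

set_option linter.unusedSectionVars false

variable {V : Type} [LinearOrder V] {G : SimpleGraph V}

lemma regval_ext {r : RegVal} {f : RegFlag} {k : Fin 3} (h1 : r.1 = f) (h2 : r.2 = k) :
    r = (f, k) := by
  rw [← h1, ← h2]

/-- Preservation of the epoch clauses inside an epoch, case `u < v`. -/
lemma ClausesL_core {u v : V} {C D : Config V} (huv : u < v)
    (hC : ClausesL u v C) (hpu : C.p u = some v)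
    (hmu : D.m u = C.m u ∨
      (D.m u = C.m u + 1 ∧ (C.m u = 0 ∨ C.m u = 1) ∧ C.r u v = (RegFlag.You, C.m u) ∧
        C.r v u = (RegFlag.You, 1)))
    (hru : D.r u v = C.r u v ∨ (D.r u v = (RegFlag.You, C.m u) ∧ D.m u = C.m u))
    (hv : VSide C D u v) : ClausesL u v D := by
  obtain ⟨ha, hh, hc, hd, hf⟩ := hC
  have hruY : (C.r u v).1 = RegFlag.You → (D.r u v).1 = RegFlag.You := by
    intro h
    rcases hru with hr | ⟨hr, -⟩
    · rw [hr]; exact h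
    · rw [hr]
  have hru2 : C.r u v = (RegFlag.You, 2) → D.r u v = (RegFlag.You, 2) := by
    intro h
    rcases hru with hr | ⟨hr, -⟩
    · rw [hr]; exact h
    · rw [hr, Acl_r_you2 ha h]
  refine ⟨?_, ?_, ?_, ?_, ?_⟩
  · exact Acl_pres ha (hmu.imp id fun h => ⟨h.1, h.2.1, h.2.2.1⟩) hru
  · -- clause (h)
    intro hpvD hmvD
    rcases hv with ⟨hp, hm, hr⟩ | ⟨hp, hm, hr⟩ | ⟨hp, hm, hr⟩ |
      ⟨w, hw, hp, hm, hr, hcor, hYw, hg⟩ | ⟨w, hw, hp, hm, hr, hcor, hPR⟩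
    · rw [hp] at hpvD; rw [hm] at hmvD
      obtain ⟨hY, h2⟩ := hh hpvD hmvD
      exact ⟨hruY hY, fun h => hru2 (h2 (by rw [← hm]; exact h))⟩
    · rw [hp] at hpvD; rw [hm] at hmvD
      obtain ⟨hY, h2⟩ := hh hpvD hmvD
      exact ⟨hruY hY, fun h => hru2 (h2 (by rw [← hm]; exact h))⟩
    · exact absurd hm hmvD
    · rw [hp] at hpvD
      have hwu : u = w := by rw [hw] at hpvD; exact (Option.some.inj hpvD).symm
      subst hwu
      rcases hg with ⟨hm0, hgg⟩ | ⟨hm1, hgg⟩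
      · rcases hgg with ⟨hlt, -⟩ | ⟨-, h20⟩
        · exact absurd hlt (lt_asymm huv)
        · refine ⟨hruY hYw, fun h2' => ?_⟩
          rw [hm, hm0] at h2'
          exact absurd h2' (by decide)
      · rcases hgg with ⟨hlt, -⟩ | ⟨-, h22⟩
        · exact absurd hlt (lt_asymm huv)
        · have hcr2 : C.r u v = (RegFlag.You, 2) := regval_ext hYw h22
          exact ⟨hruY hYw, fun _ => hru2 hcr2⟩
    · rw [hp] at hpvD
      exact absurd hpvD (by simp)
  · -- clause (c)
    intro hrD
    rcases hv with ⟨hp, hm, hr⟩ | ⟨hp, hm, hr⟩ | ⟨hp, hm, hr⟩ |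
      ⟨w, hw, hp, hm, hr, hcor, hYw, hg⟩ | ⟨w, hw, hp, hm, hr, hcor, hPR⟩
    · rw [hr] at hrD
      obtain ⟨h1, h2⟩ := hc hrD
      exact ⟨by rw [hp]; exact h1, by rw [hm]; exact h2⟩
    · rw [hr] at hrD
      obtain ⟨hpv, hmv⟩ := crv_eq_you hrD
      exact ⟨by rw [hp]; exact hpv, Or.inl (by rw [hm]; exact hmv)⟩
    · rw [hr] at hrD
      obtain ⟨h1, -⟩ := hc hrD
      rw [hp] at h1
      exact absurd h1 (by simp)
    · rw [hr] at hrD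
      obtain ⟨hpv, -⟩ := hc hrD
      have hwu : u = w := by rw [hw] at hpv; exact (Option.some.inj hpv).symm
      subst hwu
      rw [crv_self hw] at hcor
      rw [hrD] at hcor
      have hmv : C.m v = 1 := by
        have := congrArg Prod.snd hcor
        exact this.symm
      refine ⟨by rw [hp]; exact hw, Or.inr ?_⟩
      rw [hm, hmv]
      decide
    · rw [hr] at hrD
      obtain ⟨hpv, hmv⟩ := hc hrD
      have hY := (hh hpv (by rcases hmv with h | h <;> rw [h] <;> decide)).1
      have hwu : u = w := by rw [hw] at hpv; exact (Option.some.inj hpv).symm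
      subst hwu
      rw [crv_self hw] at hcor
      rw [hrD] at hcor
      have hmv1 : C.m v = 1 := (congrArg Prod.snd hcor).symm
      exact (no_reset_L huv hpv hY (Or.inl hmv1) hPR).elim
  · -- clause (d)
    intro hrD
    rcases hv with ⟨hp, hm, hr⟩ | ⟨hp, hm, hr⟩ | ⟨hp, hm, hr⟩ |
      ⟨w, hw, hp, hm, hr, hcor, hYw, hg⟩ | ⟨w, hw, hp, hm, hr, hcor, hPR⟩
    · rw [hr] at hrD
      obtain ⟨h1, h2⟩ := hd hrD
      exact ⟨by rw [hp]; exact h1, by rw [hm]; exact h2⟩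
    · rw [hr] at hrD
      obtain ⟨hpv, hmv⟩ := crv_eq_you hrD
      exact ⟨by rw [hp]; exact hpv, by rw [hm]; exact hmv⟩
    · rw [hr] at hrD
      obtain ⟨h1, -⟩ := hd hrD
      rw [hp] at h1
      exact absurd h1 (by simp)
    · rw [hr] at hrD
      obtain ⟨hpv, hmv⟩ := hd hrD
      rcases hg with ⟨h0, -⟩ | ⟨h0, -⟩ <;> rw [hmv] at h0 <;> exact absurd h0 (by decide)
    · rw [hr] at hrD
      obtain ⟨hpv, hmv⟩ := hd hrD
      have h2 := (hh hpv (by rw [hmv]; decide)).2 hmv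
      exact (no_reset_L huv hpv (by rw [h2]) (Or.inr ⟨hmv, h2⟩) hPR).elim
  · -- clause (f)
    intro hmD
    have hCvu : C.r v u = (RegFlag.You, 1) ∨ C.r v u = (RegFlag.You, 2) := by
      rcases hmu with hmu | ⟨-, -, -, hcr⟩
      · exact hf (by rw [← hmu]; exact hmD)
      · exact Or.inl hcr
    rcases hv with ⟨-, -, hr⟩ | ⟨-, -, hr⟩ | ⟨-, -, hr⟩ |
      ⟨w, -, -, -, hr, -, -, -⟩ | ⟨w, -, -, -, hr, -, -⟩
    · rw [hr]; exact hCvu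
    · rw [hr]
      rcases hCvu with h | h
      · obtain ⟨hpv, hmv⟩ := hc h
        rw [crv_self hpv]
        rcases hmv with hmv | hmv <;> rw [hmv]
        · exact Or.inl rfl
        · exact Or.inr rfl
      · obtain ⟨hpv, hmv⟩ := hd h
        rw [crv_self hpv, hmv]
        exact Or.inr rfl
    · rw [hr]; exact hCvu
    · rw [hr]; exact hCvu
    · rw [hr]; exact hCvu

/-- Establishing the epoch clauses when `u` seduces `v`, case `u < v`. -/
lemma ClausesL_entry {u v : V} {C D : Config V} (huv : u < v) (hK : KL u v C)
    (hcuv : C.r u v = (RegFlag.Idle, 0)) (hcvu : C.r v u = (RegFlag.Idle, 0))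
    (hmuD : D.m u = 0) (hruD : D.r u v = C.r u v) (hv : VSide C D u v) :
    ClausesL u v D := by
  have hKv := hK hcvu
  refine ⟨Or.inl ⟨hmuD, Or.inl (by rw [hruD, hcuv])⟩, ?_, ?_, ?_, ?_⟩
  · intro hpvD hmvD
    rcases hv with ⟨hp, hm, hr⟩ | ⟨hp, hm, hr⟩ | ⟨hp, hm, hr⟩ |
      ⟨w, hw, hp, hm, hr, hcor, hYw, hg⟩ | ⟨w, hw, hp, hm, hr, hcor, hPR⟩
    · rw [hp] at hpvD; rw [hm] at hmvD
      rcases hKv with h | h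
      · exact absurd hpvD h
      · exact absurd h hmvD
    · rw [hp] at hpvD; rw [hm] at hmvD
      rcases hKv with h | h
      · exact absurd hpvD h
      · exact absurd h hmvD
    · exact absurd hm hmvD
    · rw [hp] at hpvD
      have hwu : u = w := by rw [hw] at hpvD; exact (Option.some.inj hpvD).symm
      subst hwu
      rw [crv_self hw, hcvu] at hcor
      simp at hcor
    · rw [hp] at hpvD
      exact absurd hpvD (by simp)
  · intro hrD
    rcases hv with ⟨hp, hm, hr⟩ | ⟨hp, hm, hr⟩ | ⟨hp, hm, hr⟩ |
      ⟨w, hw, hp, hm, hr, hcor, hYw, hg⟩ | ⟨w, hw, hp, hm, hr, hcor, hPR⟩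
    · rw [hr, hcvu] at hrD; exact absurd hrD (by decide)
    · rw [hr] at hrD
      obtain ⟨hpv, hmv⟩ := crv_eq_you hrD
      rcases hKv with h | h
      · exact absurd hpv h
      · rw [h] at hmv; exact absurd hmv (by decide)
    · rw [hr, hcvu] at hrD; exact absurd hrD (by decide)
    · rw [hr, hcvu] at hrD; exact absurd hrD (by decide)
    · rw [hr, hcvu] at hrD; exact absurd hrD (by decide)
  · intro hrD
    rcases hv with ⟨hp, hm, hr⟩ | ⟨hp, hm, hr⟩ | ⟨hp, hm, hr⟩ |
      ⟨w, hw, hp, hm, hr, hcor, hYw, hg⟩ | ⟨w, hw, hp, hm, hr, hcor, hPR⟩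
    · rw [hr, hcvu] at hrD; exact absurd hrD (by decide)
    · rw [hr] at hrD
      obtain ⟨hpv, hmv⟩ := crv_eq_you hrD
      rcases hKv with h | h
      · exact absurd hpv h
      · rw [h] at hmv; exact absurd hmv (by decide)
    · rw [hr, hcvu] at hrD; exact absurd hrD (by decide)
    · rw [hr, hcvu] at hrD; exact absurd hrD (by decide)
    · rw [hr, hcvu] at hrD; exact absurd hrD (by decide)
  · intro h
    rw [hmuD] at h
    exact absurd h (by decide)

/-- Preservation of `EpochL`, case `u < v`. -/
lemma EpochL_pres {u v : V} {C D : Config V} (huv : u < v) (hK : KL u v C)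
    (hE : EpochL u v C) (hu : NodeTrans C D u) (hv : NodeTrans C D v) :
    EpochL u v D := by
  intro hpuD
  have hvs : VSide C D u v := vside_of_nodeTrans hv
  rcases hu with ⟨hp, hm, hr⟩ | ⟨b, hp, hm, hr⟩ | ⟨b, h1, h2, h3, h4, h5, h6, h7⟩ |
    ⟨b, h1, h2, h3, h4, h5, h6, h7⟩ | ⟨w, h1, h2, h3, h4, h5, h6, h7⟩ |
    ⟨w, h1, h2, h3, h4, h5, h6⟩
  · rw [hp] at hpuD
    exact ClausesL_core huv (hE hpuD) hpuD (Or.inl hm) (Or.inl (hr v)) hvs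
  · rw [hp] at hpuD
    by_cases hvb : v = b
    · subst hvb
      exact ClausesL_core huv (hE hpuD) hpuD (Or.inl hm)
        (Or.inr ⟨by rw [hr v, if_pos rfl, crv_self hpuD], hm⟩) hvs
    · exact ClausesL_core huv (hE hpuD) hpuD (Or.inl hm)
        (Or.inl (by rw [hr v, if_neg hvb])) hvs
  · -- seduction
    have hbv : v = b := by rw [h5] at hpuD; exact (Option.some.inj hpuD).symm
    subst hbv
    rw [crv_none h1] at h2
    exact ClausesL_entry huv hK h2 h3 h6 (h7 v) hvs
  · -- marriage: impossible since u < v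
    have hbv : v = b := by rw [h5] at hpuD; exact (Option.some.inj hpuD).symm
    subst hbv
    exact absurd h4 (lt_asymm huv)
  · -- increase
    rw [h5] at hpuD
    have hwv : v = w := by rw [h1] at hpuD; exact (Option.some.inj hpuD).symm
    subst hwv
    rw [crv_self hpuD] at h2
    have hg : (C.m u = 0 ∨ C.m u = 1) ∧ (C.r v u).2 = 1 := by
      rcases h4 with ⟨hm0, hgg⟩ | ⟨hm1, hgg⟩
      · rcases hgg with ⟨-, h⟩ | ⟨hlt, -⟩
        · exact ⟨Or.inl hm0, h⟩
        · exact absurd hlt (lt_asymm huv)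
      · rcases hgg with ⟨-, h⟩ | ⟨hlt, -⟩
        · exact ⟨Or.inr hm1, h⟩
        · exact absurd hlt (lt_asymm huv)
    have hrvu : C.r v u = (RegFlag.You, 1) := regval_ext h3 hg.2
    exact ClausesL_core huv (hE hpuD) hpuD (Or.inr ⟨h6, hg.1, h2, hrvu⟩)
      (Or.inl (h7 v)) hvs
  · rw [h4] at hpuD
    exact absurd hpuD (by simp)

end Stmt17Pres

section Stmt17PresR

set_option linter.unusedSectionVars false
set_option linter.unusedVariables false

variable {V : Type} [LinearOrder V] {G : SimpleGraph V}

/-- Preservation of the epoch clauses inside an epoch, case `v < u`. -/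
lemma ClausesR_core {u v : V} {C D : Config V} (hvu : v < u)
    (hC : ClausesR u v C) (hpu : C.p u = some v)
    (hmu : D.m u = C.m u ∨
      (D.m u = C.m u + 1 ∧ C.r u v = (RegFlag.You, C.m u) ∧
        ((C.m u = 0 ∧ C.r v u = (RegFlag.You, 0)) ∨
         (C.m u = 1 ∧ C.r v u = (RegFlag.You, 2)))))
    (hru : D.r u v = C.r u v ∨ (D.r u v = (RegFlag.You, C.m u) ∧ D.m u = C.m u))
    (hv : VSide C D u v) : ClausesR u v D := by
  obtain ⟨ha, hh, hd, hf⟩ := hC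
  have hstep : C.m u ≠ 0 → (C.r u v = (RegFlag.You, 1) ∨ C.r u v = (RegFlag.You, 2)) →
      D.m u ≠ 0 ∧ (D.r u v = (RegFlag.You, 1) ∨ D.r u v = (RegFlag.You, 2)) := by
    intro hm0 hrC
    constructor
    · rcases hmu with hmu | ⟨hmu, -, hg⟩
      · rw [hmu]; exact hm0
      · rcases hg with ⟨h0, -⟩ | ⟨h1, -⟩
        · exact absurd h0 hm0
        · rw [hmu, h1]; decide
    · rcases hru with hr | ⟨hr, -⟩
      · rw [hr]; exact hrC
      · rw [hr]
        have hmc : C.m u = 1 ∨ C.m u = 2 := by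
          rcases hrC with h | h
          · exact Acl_r_you1 ha h
          · exact Or.inr (Acl_r_you2 ha h)
        rcases hmc with h | h <;> rw [h]
        · exact Or.inl rfl
        · exact Or.inr rfl
  refine ⟨?_, ?_, ?_, ?_⟩
  · refine Acl_pres ha (hmu.imp id fun h => ⟨h.1, ?_, h.2.1⟩) hru
    exact h.2.2.imp And.left And.left
  · -- clause (h')
    intro hpvD hmvD
    rcases hv with ⟨hp, hm, hr⟩ | ⟨hp, hm, hr⟩ | ⟨hp, hm, hr⟩ |
      ⟨w, hw, hp, hm, hr, hcor, hYw, hg⟩ | ⟨w, hw, hp, hm, hr, hcor, hPR⟩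
    · rw [hp] at hpvD; rw [hm] at hmvD
      obtain ⟨h1, h2⟩ := hh hpvD hmvD
      exact hstep h1 h2
    · rw [hp] at hpvD; rw [hm] at hmvD
      obtain ⟨h1, h2⟩ := hh hpvD hmvD
      exact hstep h1 h2
    · rw [hm] at hmvD
      exact absurd hmvD (by decide)
    · rw [hp] at hpvD
      have hwu : u = w := by rw [hw] at hpvD; exact (Option.some.inj hpvD).symm
      subst hwu
      rcases hg with ⟨hm0, -⟩ | ⟨hm1, hgg⟩
      · rw [hm, hm0] at hmvD
        exact absurd hmvD (by decide)
      · rcases hgg with ⟨-, h2⟩ | ⟨hlt, -⟩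
        · have hcr1 : C.r u v = (RegFlag.You, 1) := regval_ext hYw h2
          refine hstep ?_ (Or.inl hcr1)
          rcases Acl_r_you1 ha hcr1 with h | h <;> rw [h] <;> decide
        · exact absurd hlt (lt_asymm hvu)
    · rw [hp] at hpvD
      exact absurd hpvD (by simp)
  · -- clause (d')
    intro hrD
    rcases hv with ⟨hp, hm, hr⟩ | ⟨hp, hm, hr⟩ | ⟨hp, hm, hr⟩ |
      ⟨w, hw, hp, hm, hr, hcor, hYw, hg⟩ | ⟨w, hw, hp, hm, hr, hcor, hPR⟩
    · rw [hr] at hrD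
      obtain ⟨h1, h2⟩ := hd hrD
      exact ⟨by rw [hp]; exact h1, by rw [hm]; exact h2⟩
    · rw [hr] at hrD
      obtain ⟨hpv, hmv⟩ := crv_eq_you hrD
      exact ⟨by rw [hp]; exact hpv, by rw [hm]; exact hmv⟩
    · rw [hr] at hrD
      obtain ⟨h1, -⟩ := hd hrD
      rw [hp] at h1
      exact absurd h1 (by simp)
    · rw [hr] at hrD
      obtain ⟨hpv, hmv⟩ := hd hrD
      rcases hg with ⟨h0, -⟩ | ⟨h0, -⟩ <;> rw [hmv] at h0 <;> exact absurd h0 (by decide)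
    · rw [hr] at hrD
      obtain ⟨hpv, hmv⟩ := hd hrD
      exact (no_reset_R hvu hpv hmv (hh hpv hmv).2 hPR).elim
  · -- clause (f')
    intro hmD
    have hCvu : C.r v u = (RegFlag.You, 2) := by
      rcases hmu with hmu | ⟨hmu, -, hg⟩
      · exact hf (by rw [← hmu]; exact hmD)
      · rcases hg with ⟨h0, -⟩ | ⟨-, h2⟩
        · rw [hmu, h0] at hmD
          exact absurd hmD (by decide)
        · exact h2
    rcases hv with ⟨-, -, hr⟩ | ⟨-, -, hr⟩ | ⟨-, -, hr⟩ |
      ⟨w, -, -, -, hr, -, -, -⟩ | ⟨w, -, -, -, hr, -, -⟩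
    · rw [hr]; exact hCvu
    · rw [hr]
      obtain ⟨hpv, hmv⟩ := hd hCvu
      rw [crv_self hpv, hmv]
    · rw [hr]; exact hCvu
    · rw [hr]; exact hCvu
    · rw [hr]; exact hCvu

/-- Establishing the epoch clauses when `u` marries `v`, case `v < u`. -/
lemma ClausesR_entry {u v : V} {C D : Config V} (hvu : v < u) (hK : KR u v C)
    (hcuv : C.r u v = (RegFlag.Idle, 0)) (hcvu : C.r v u = (RegFlag.You, 0))
    (hmuD : D.m u = 0) (hruD : D.r u v = C.r u v) (hv : VSide C D u v) :
    ClausesR u v D := by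
  refine ⟨Or.inl ⟨hmuD, Or.inl (by rw [hruD, hcuv])⟩, ?_, ?_, ?_⟩
  · intro hpvD hmvD
    rcases hv with ⟨hp, hm, hr⟩ | ⟨hp, hm, hr⟩ | ⟨hp, hm, hr⟩ |
      ⟨w, hw, hp, hm, hr, hcor, hYw, hg⟩ | ⟨w, hw, hp, hm, hr, hcor, hPR⟩
    · rw [hp] at hpvD; rw [hm] at hmvD
      rcases hK hpvD hmvD with h | h <;> rw [hcvu] at h <;> exact absurd h (by decide)
    · rw [hp] at hpvD; rw [hm] at hmvD
      rcases hK hpvD hmvD with h | h <;> rw [hcvu] at h <;> exact absurd h (by decide)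
    · rw [hm] at hmvD
      exact absurd hmvD (by decide)
    · rw [hp] at hpvD
      have hwu : u = w := by rw [hw] at hpvD; exact (Option.some.inj hpvD).symm
      subst hwu
      rw [hcuv] at hYw
      exact absurd hYw (by decide)
    · rw [hp] at hpvD
      exact absurd hpvD (by simp)
  · intro hrD
    rcases hv with ⟨hp, hm, hr⟩ | ⟨hp, hm, hr⟩ | ⟨hp, hm, hr⟩ |
      ⟨w, hw, hp, hm, hr, hcor, hYw, hg⟩ | ⟨w, hw, hp, hm, hr, hcor, hPR⟩
    · rw [hr, hcvu] at hrD; exact absurd hrD (by decide)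
    · rw [hr] at hrD
      obtain ⟨hpv, hmv⟩ := crv_eq_you hrD
      rcases hK hpv hmv with h | h <;> rw [hcvu] at h <;> exact absurd h (by decide)
    · rw [hr, hcvu] at hrD; exact absurd hrD (by decide)
    · rw [hr, hcvu] at hrD; exact absurd hrD (by decide)
    · rw [hr, hcvu] at hrD; exact absurd hrD (by decide)
  · intro h
    rw [hmuD] at h
    exact absurd h (by decide)

/-- Preservation of `EpochR`, case `v < u`. -/
lemma EpochR_pres {u v : V} {C D : Config V} (hvu : v < u) (hK : KR u v C)
    (hE : EpochR u v C) (hu : NodeTrans C D u) (hv : NodeTrans C D v) :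
    EpochR u v D := by
  intro hpuD
  have hvs : VSide C D u v := vside_of_nodeTrans hv
  rcases hu with ⟨hp, hm, hr⟩ | ⟨b, hp, hm, hr⟩ | ⟨b, h1, h2, h3, h4, h5, h6, h7⟩ |
    ⟨b, h1, h2, h3, h4, h5, h6, h7⟩ | ⟨w, h1, h2, h3, h4, h5, h6, h7⟩ |
    ⟨w, h1, h2, h3, h4, h5, h6⟩
  · rw [hp] at hpuD
    exact ClausesR_core hvu (hE hpuD) hpuD (Or.inl hm) (Or.inl (hr v)) hvs
  · rw [hp] at hpuD
    by_cases hvb : v = b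
    · subst hvb
      exact ClausesR_core hvu (hE hpuD) hpuD (Or.inl hm)
        (Or.inr ⟨by rw [hr v, if_pos rfl, crv_self hpuD], hm⟩) hvs
    · exact ClausesR_core hvu (hE hpuD) hpuD (Or.inl hm)
        (Or.inl (by rw [hr v, if_neg hvb])) hvs
  · -- seduction: impossible since v < u
    have hbv : v = b := by rw [h5] at hpuD; exact (Option.some.inj hpuD).symm
    subst hbv
    exact absurd h4 (lt_asymm hvu)
  · -- marriage
    have hbv : v = b := by rw [h5] at hpuD; exact (Option.some.inj hpuD).symm
    subst hbv
    rw [crv_none h1] at h2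
    exact ClausesR_entry hvu hK h2 h3 h6 (h7 v) hvs
  · -- increase
    rw [h5] at hpuD
    have hwv : v = w := by rw [h1] at hpuD; exact (Option.some.inj hpuD).symm
    subst hwv
    rw [crv_self hpuD] at h2
    have hg : (C.m u = 0 ∧ C.r v u = (RegFlag.You, 0)) ∨
        (C.m u = 1 ∧ C.r v u = (RegFlag.You, 2)) := by
      rcases h4 with ⟨hm0, hgg⟩ | ⟨hm1, hgg⟩
      · rcases hgg with ⟨hlt, -⟩ | ⟨-, h⟩
        · exact absurd hlt (lt_asymm hvu)
        · exact Or.inl ⟨hm0, regval_ext h3 h⟩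
      · rcases hgg with ⟨hlt, -⟩ | ⟨-, h⟩
        · exact absurd hlt (lt_asymm hvu)
        · exact Or.inr ⟨hm1, regval_ext h3 h⟩
    exact ClausesR_core hvu (hE hpuD) hpuD (Or.inr ⟨h6, h2, hg⟩) (Or.inl (h7 v)) hvs
  · rw [h4] at hpuD
    exact absurd hpuD (by simp)

end Stmt17PresR

section Stmt17Final

set_option linter.unusedSectionVars false
set_option linter.unusedVariables false

variable {V : Type} [LinearOrder V] {G : SimpleGraph V}

lemma KL_pres {u v : V} {C D : Config V} (hK : KL u v C) (hv : VSide C D u v) :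
    KL u v D := by
  intro hrD
  rcases hv with ⟨hp, hm, hr⟩ | ⟨hp, hm, hr⟩ | ⟨hp, hm, hr⟩ |
    ⟨w, hw, hp, hm, hr, hcor, -, -⟩ | ⟨w, hw, hp, hm, hr, -, -⟩
  · rw [hr] at hrD
    rcases hK hrD with h | h
    · exact Or.inl (by rw [hp]; exact h)
    · exact Or.inr (by rw [hm]; exact h)
  · rw [hr] at hrD
    have h := crv_eq_idle hrD
    refine Or.inl ?_
    rw [hp, h]
    simp
  · exact Or.inr hm
  · rw [hr] at hrD
    by_cases hwu : u = w
    · subst hwu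
      rw [crv_self hw, hrD] at hcor
      simp at hcor
    · refine Or.inl ?_
      rw [hp, hw]
      simpa using fun h => hwu h.symm
  · refine Or.inl ?_
    rw [hp]
    simp

lemma KR_pres {u v : V} {C D : Config V} (hK : KR u v C) (hv : VSide C D u v) :
    KR u v D := by
  intro hpvD hmvD
  rcases hv with ⟨hp, hm, hr⟩ | ⟨hp, hm, hr⟩ | ⟨hp, hm, hr⟩ |
    ⟨w, hw, hp, hm, hr, hcor, -, hg⟩ | ⟨w, hw, hp, hm, hr, -, -⟩
  · rw [hp] at hpvD; rw [hm] at hmvD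
    rw [hr]
    exact hK hpvD hmvD
  · rw [hp] at hpvD; rw [hm] at hmvD
    rw [hr, crv_self hpvD, hmvD]
    exact Or.inr rfl
  · rw [hm] at hmvD
    exact absurd hmvD (by decide)
  · rw [hp] at hpvD
    have hwu : u = w := by rw [hw] at hpvD; exact (Option.some.inj hpvD).symm
    subst hwu
    rcases hg with ⟨h0, -⟩ | ⟨h1, -⟩
    · rw [hm, h0] at hmvD
      exact absurd hmvD (by decide)
    · rw [hr, hcor, crv_self hw, h1]
      exact Or.inl rfl
  · rw [hp] at hpvD
    exact absurd hpvD (by simp)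

/-- The effect on `v`'s variables of the `u`-rule executed by `v`. -/
lemma base_info (E : Execution G) {k : ℕ} {u v : V} (h : execVRule E k v u) :
    ((E.conf (k + 1)).p v = (E.conf k).p v ∧ (E.conf (k + 1)).m v = (E.conf k).m v ∧
      (E.conf (k + 1)).r v u = correctRegisterValue (E.conf k) v u) ∨
    (E.conf (k + 1)).m v = 0 ∨
    ((E.conf k).p v = some u ∧ (E.conf (k + 1)).p v = (E.conf k).p v ∧
      (E.conf (k + 1)).m v = (E.conf k).m v + 1 ∧
      (E.conf (k + 1)).r v u = (E.conf k).r v u ∧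
      (E.conf k).r v u = correctRegisterValue (E.conf k) v u ∧
      ((E.conf k).m v = 0 ∨ (E.conf k).m v = 1)) := by
  obtain ⟨hkT, hact⟩ := h
  have hs := E.conf_succ k hkT
  rcases hact with ha | ha | ha | ⟨ha | ha, hp⟩
  · refine Or.inl ⟨?_, ?_, ?_⟩ <;> rw [hs] <;> simp [step, ha]
  · refine Or.inr (Or.inl ?_); rw [hs]; simp [step, ha]
  · refine Or.inr (Or.inl ?_); rw [hs]; simp [step, ha]
  · obtain ⟨w, hw, hcor, hY, hg⟩ := E.act_eligible k hkT v _ ha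
    have hwu : u = w := by rw [hw] at hp; exact (Option.some.inj hp).symm
    subst hwu
    refine Or.inr (Or.inr ⟨hp, ?_, ?_, ?_, hcor, ?_⟩)
    · rw [hs]; simp [step, ha]
    · rw [hs]; simp [step, ha]
    · rw [hs]; simp [step, ha]
    · exact hg.imp And.left And.left
  · refine Or.inr (Or.inl ?_); rw [hs]; simp [step, ha]

lemma KL_base (E : Execution G) {k : ℕ} {u v : V} (h : execVRule E k v u) :
    KL u v (E.conf (k + 1)) := by
  rcases base_info E h with ⟨hp, hm, hr⟩ | hm | ⟨hpv, hp, hm, hr, hcor, -⟩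
  · intro hrD
    rw [hr] at hrD
    refine Or.inl ?_
    rw [hp, crv_eq_idle hrD]
    simp
  · intro _
    exact Or.inr hm
  · intro hrD
    rw [hr] at hrD
    rw [crv_self hpv] at hcor
    rw [hcor] at hrD
    simp at hrD
  
lemma KR_base (E : Execution G) {k : ℕ} {u v : V} (h : execVRule E k v u) :
    KR u v (E.conf (k + 1)) := by
  rcases base_info E h with ⟨hp, hm, hr⟩ | hm | ⟨hpv, hp, hm, hr, hcor, hg⟩
  · intro hpvD hmvD
    rw [hp] at hpvD; rw [hm] at hmvD
    rw [hr, crv_self hpvD, hmvD]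
    exact Or.inr rfl
  · intro _ hmvD
    rw [hm] at hmvD
    exact absurd hmvD (by decide)
  · intro hpvD hmvD
    rcases hg with h0 | h1
    · rw [hm, h0] at hmvD
      exact absurd hmvD (by decide)
    · rw [hr, hcor, crv_self hpv, h1]
      exact Or.inl rfl

/-- Extraction of the correct state at the end, case `u < v`. -/
lemma final_L {u v : V} {C : Config V} (huv : u < v) (hCl : ClausesL u v C)
    (hp : C.p u = some v) (hm : C.m u = 2) : ∃ α β, correctState C u v α β := by
  obtain ⟨ha, hh, hc, hd, hf⟩ := hCl
  have hruv : C.r u v = (RegFlag.You, 1) ∨ C.r u v = (RegFlag.You, 2) := by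
    rcases ha with ⟨h0, -⟩ | ⟨h0, -⟩ | ⟨-, hr⟩
    · rw [hm] at h0; exact absurd h0 (by decide)
    · rw [hm] at h0; exact absurd h0 (by decide)
    · exact hr
  rcases hf hm with h1 | h2
  · obtain ⟨hpv, hmv⟩ := hc h1
    rcases hmv with hmv | hmv
    · rcases hruv with hr | hr
      · refine ⟨2, 1, Or.inr ⟨⟨hp, hpv, hm, hmv⟩, Or.inr ⟨Or.inr rfl, ?_, ?_⟩⟩⟩
        · rw [hr]; decide
        · rw [h1]
      · exact ⟨2, 1, Or.inl ⟨⟨hp, hpv, hm, hmv⟩, hr, h1,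
          Or.inr (Or.inr (Or.inr (Or.inl rfl)))⟩⟩
    · have hcr : C.r u v = (RegFlag.You, 2) :=
        (hh hpv (by rw [hmv]; decide)).2 hmv
      refine ⟨2, 2, Or.inr ⟨⟨hp, hpv, hm, hmv⟩, Or.inl ⟨Or.inr rfl, hcr, ?_⟩⟩⟩
      rw [h1]; decide
  · obtain ⟨hpv, hmv⟩ := hd h2
    have hcr : C.r u v = (RegFlag.You, 2) := (hh hpv (by rw [hmv]; decide)).2 hmv
    exact ⟨2, 2, Or.inl ⟨⟨hp, hpv, hm, hmv⟩, hcr, h2,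
      Or.inr (Or.inr (Or.inr (Or.inr rfl)))⟩⟩

/-- Extraction of the correct state at the end, case `v < u`. -/
lemma final_R {u v : V} {C : Config V} (hvu : v < u) (hCl : ClausesR u v C)
    (hp : C.p u = some v) (hm : C.m u = 2) : ∃ α β, correctState C v u α β := by
  obtain ⟨ha, hh, hd, hf⟩ := hCl
  have hrvu := hf hm
  obtain ⟨hpv, hmv⟩ := hd hrvu
  obtain ⟨-, hruv⟩ := hh hpv hmv
  rcases hruv with hr | hr
  · refine ⟨2, 2, Or.inr ⟨⟨hpv, hp, hmv, hm⟩, Or.inl ⟨Or.inr rfl, hrvu, ?_⟩⟩⟩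
    rw [hr]; decide
  · exact ⟨2, 2, Or.inl ⟨⟨hpv, hp, hmv, hm⟩, hrvu, hr,
      Or.inr (Or.inr (Or.inr (Or.inr rfl)))⟩⟩

end Stmt17Final

/-- Let `(u,v)` be an edge.  If `v` executes a `u`-rule in
transition `i`, then `u` executes a `Reset` in transition `j` (`i + 1 ≤ j`),
and `(p_u,m_u) = (v,2)` in `A_4 = conf l` (`j + 1 ≤ l ≤ T`), then the edge
`(min(u,v), max(u,v))` is in a correct state in `A_4`. -/
theorem stmt_17 {V : Type} [Fintype V] [LinearOrder V] (G : SimpleGraph V)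
    (u v : V) (hadj : G.Adj u v) (E : Execution G)
    (i j l : ℕ) (hij : i + 1 ≤ j) (hjl : j + 1 ≤ l) (hlT : l ≤ E.T)
    (hi : execVRule E i v u)
    (hjT : j < E.T) (hj : E.act j u = some Rule.reset)
    (hlp : (E.conf l).p u = some v) (hlm : (E.conf l).m u = 2) :
    ∃ α β, correctState (E.conf l) (min u v) (max u v) α β := by
  rcases lt_trichotomy u v with huv | heq | hvu
  · rw [min_eq_left huv.le, max_eq_right huv.le]
    have hKall : ∀ t, i + 1 ≤ t → t ≤ l → KL u v (E.conf t) := by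
      intro t
      induction t with
      | zero => intro h1 _; exact absurd h1 (by omega)
      | succ n ih =>
        intro h1 h2
        rcases Nat.lt_or_ge (i + 1) (n + 1) with hlt | hge
        · have hnT : n < E.T := by omega
          exact KL_pres (ih (by omega) (by omega))
            (vside_of_nodeTrans (exec_nodeTrans E hnT v))
        · have hni : n + 1 = i + 1 := by omega
          rw [hni]
          exact KL_base E hi
    have hEall : ∀ t, j + 1 ≤ t → t ≤ l → EpochL u v (E.conf t) := by
      intro t
      induction t with
      | zero => intro h1 _; exact absurd h1 (by omega)
      | succ n ih =>
        intro h1 h2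
        rcases Nat.lt_or_ge (j + 1) (n + 1) with hlt | hge
        · have hnT : n < E.T := by omega
          exact EpochL_pres huv (hKall n (by omega) (by omega))
            (ih (by omega) (by omega))
            (exec_nodeTrans E hnT u) (exec_nodeTrans E hnT v)
        · have hnj : n = j := by omega
          subst hnj
          intro hp
          rw [E.conf_succ n hjT] at hp
          simp [step, hj] at hp
    exact final_L huv (hEall l hjl le_rfl hlp) hlp hlm
  · exact absurd heq hadj.ne
  · rw [min_eq_right hvu.le, max_eq_left hvu.le]
    have hKall : ∀ t, i + 1 ≤ t → t ≤ l → KR u v (E.conf t) := by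
      intro t
      induction t with
      | zero => intro h1 _; exact absurd h1 (by omega)
      | succ n ih =>
        intro h1 h2
        rcases Nat.lt_or_ge (i + 1) (n + 1) with hlt | hge
        · have hnT : n < E.T := by omega
          exact KR_pres (ih (by omega) (by omega))
            (vside_of_nodeTrans (exec_nodeTrans E hnT v))
        · have hni : n + 1 = i + 1 := by omega
          rw [hni]
          exact KR_base E hi
    have hEall : ∀ t, j + 1 ≤ t → t ≤ l → EpochR u v (E.conf t) := by
      intro t
      induction t with
      | zero => intro h1 _; exact absurd h1 (by omega)
      | succ n ih =>
        intro h1 h2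
        rcases Nat.lt_or_ge (j + 1) (n + 1) with hlt | hge
        · have hnT : n < E.T := by omega
          exact EpochR_pres hvu (hKall n (by omega) (by omega))
            (ih (by omega) (by omega))
            (exec_nodeTrans E hnT u) (exec_nodeTrans E hnT v)
        · have hnj : n = j := by omega
          subst hnj
          intro hp
          rw [E.conf_succ n hjT] at hp
          simp [step, hj] at hp
    exact final_R hvu (hEall l hjl le_rfl hlp) hlp hlm
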